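/- Let f_n count paths from (0,0) to (n,n) in the Catalan–Schröder lattice L_CS (diagonal steps allowed from points (a,b) with b ≥ a). Then f_n satisfies the recurrence f_n = Σ_{k=1}^{n} (C_{k-1} + S_{k-1} + [k=1]) · f_{n-k} for every n ≥ 1, with f_0 = 1. -/

import Mathlib

open Finset PowerSeries

/-- Large Schröder numbers. -/
def schroeder : ℕ → ℕ
  | 0 => 1
  | n + 1 => schroeder n + ∑ i : Fin (n + 1), schroeder i * schroeder (n - i)

/-- The points visited by a path (a list of steps) starting at (0,0). -/
def pts (l : List (ℤ × ℤ)) : List (ℤ × ℤ) :=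
  l.scanl (fun p s => (p.1 + s.1, p.2 + s.2)) (0, 0)

/-- The endpoint of a path starting at (0,0). -/
def endPt (l : List (ℤ × ℤ)) : ℤ × ℤ :=
  ((l.map Prod.fst).sum, (l.map Prod.snd).sum)

/-- All steps are unit steps (1,0) or (0,1). -/
def unitSteps (l : List (ℤ × ℤ)) : Prop := ∀ s ∈ l, s = (1, 0) ∨ s = (0, 1)

/-- All steps are (1,0), (0,1) or (1,1). -/
def schSteps (l : List (ℤ × ℤ)) : Prop := ∀ s ∈ l, s = (1, 0) ∨ s = (0, 1) ∨ s = (1, 1)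

/-- The path stays weakly below the diagonal y = x. -/
def weaklyBelow (l : List (ℤ × ℤ)) : Prop := ∀ p ∈ pts l, p.2 ≤ p.1

/-- The path stays strictly below the diagonal except at its start (0,0). -/
def strictBelowAfterStart (l : List (ℤ × ℤ)) : Prop :=
  ∀ p ∈ pts l, p ≠ (0, 0) → p.2 < p.1

/-- Validity of a path starting at point `p` in a lattice where steps (1,0) and (0,1)
are allowed everywhere and the diagonal step (1,1) is allowed exactly from points
satisfying `D`. -/
def okFrom (D : ℤ × ℤ → Prop) : ℤ × ℤ → List (ℤ × ℤ) → Prop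
  | _, [] => True
  | p, s :: l => (s = (1, 0) ∨ s = (0, 1) ∨ (s = (1, 1) ∧ D p)) ∧
      okFrom D (p.1 + s.1, p.2 + s.2) l

/-- Paths from (0,0) to (n,k) in the Catalan–Schröder lattice L_CS:
diagonal steps allowed from points (a,b) with b ≥ a. -/
def LCS (n k : ℕ) : Set (List (ℤ × ℤ)) :=
  {l | okFrom (fun p => p.1 ≤ p.2) (0, 0) l ∧ endPt l = ((n : ℤ), (k : ℤ))}

/-- Paths from (0,0) to (n,k) in the lattice L*_CS:
diagonal steps allowed only from points (a,b) with b > a. -/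
def LCSstar (n k : ℕ) : Set (List (ℤ × ℤ)) :=
  {l | okFrom (fun p => p.1 < p.2) (0, 0) l ∧ endPt l = ((n : ℤ), (k : ℤ))}

/-- Weakly subdiagonal unit-step paths from (0,0) to (n,k). -/
def CPath (n k : ℕ) : Set (List (ℤ × ℤ)) :=
  {l | unitSteps l ∧ endPt l = ((n : ℤ), (k : ℤ)) ∧ weaklyBelow l}

/-- Weakly subdiagonal paths from (0,0) to (n,k) with steps (1,0),(0,1),(1,1). -/
def SPath (n k : ℕ) : Set (List (ℤ × ℤ)) :=
  {l | schSteps l ∧ endPt l = ((n : ℤ), (k : ℤ)) ∧ weaklyBelow l}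

/-- Number of paths from (0,0) to (n,n) in L_CS. -/
noncomputable def fCS (n : ℕ) : ℕ := Nat.card ↥(LCS n n)

/-- Number of paths from (0,0) to (n,n) in L*_CS. -/
noncomputable def fCSstar (n : ℕ) : ℕ := Nat.card ↥(LCSstar n n)

/-- Generating function of the Catalan numbers. -/
noncomputable def catalanGF : PowerSeries ℤ := PowerSeries.mk fun n => (catalan n : ℤ)

/-- Generating function of the large Schröder numbers. -/
noncomputable def schroederGF : PowerSeries ℤ := PowerSeries.mk fun n => (schroeder n : ℤ)

/-- Generating function F(x) of diagonal path counts in L_CS. -/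
noncomputable def FGF : PowerSeries ℤ := PowerSeries.mk fun n => (fCS n : ℤ)

/-- Generating function F*(x) of diagonal path counts in L*_CS. -/
noncomputable def FstarGF : PowerSeries ℤ := PowerSeries.mk fun n => (fCSstar n : ℤ)

/-- Substitution x ↦ x² in a formal power series: g(x²). -/
noncomputable def subSq (g : PowerSeries ℤ) : PowerSeries ℤ :=
  PowerSeries.mk fun n => if 2 ∣ n then PowerSeries.coeff (n / 2) g else 0

/-- Substitution x ↦ x³ in a formal power series: g(x³). -/
noncomputable def subCube (g : PowerSeries ℤ) : PowerSeries ℤ :=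
  PowerSeries.mk fun n => if 3 ∣ n then PowerSeries.coeff (n / 3) g else 0

namespace CSAux

abbrev Pt := (ℤ × ℤ)

lemma endPt_nil : endPt ([] : List Pt) = (0, 0) := rfl

lemma endPt_cons (s : Pt) (l : List Pt) : endPt (s :: l) = s + endPt l := by
  simp [endPt, Prod.ext_iff]

lemma endPt_append (a b : List Pt) : endPt (a ++ b) = endPt a + endPt b := by
  simp [endPt, Prod.ext_iff]

/-- prefix sum: position after `i` steps. -/
def pre (l : List Pt) (i : ℕ) : Pt := endPt (l.take i)

lemma pre_zero (l : List Pt) : pre l 0 = (0, 0) := rfl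

lemma pre_length (l : List Pt) : pre l l.length = endPt l := by simp [pre]

lemma pre_of_le {l : List Pt} {i : ℕ} (h : l.length ≤ i) : pre l i = endPt l := by
  simp [pre, List.take_of_length_le h]

lemma pre_cons (s : Pt) (l : List Pt) (i : ℕ) : pre (s :: l) (i + 1) = s + pre l i := by
  simp [pre, List.take_succ_cons, endPt_cons]

lemma pre_append_left {a : List Pt} (b : List Pt) {i : ℕ} (h : i ≤ a.length) :
    pre (a ++ b) i = pre a i := by
  simp [pre, List.take_append_of_le_length h]

lemma pre_append_right (a b : List Pt) (j : ℕ) :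
    pre (a ++ b) (a.length + j) = endPt a + pre b j := by
  simp [pre, List.take_append, endPt_append, List.take_of_length_le (Nat.le_add_right a.length j)]

lemma pre_succ {l : List Pt} {i : ℕ} (h : i < l.length) :
    pre l (i + 1) = pre l i + l.get ⟨i, h⟩ := by
  have : l.take (i+1) = l.take i ++ [l.get ⟨i, h⟩] := by
    rw [List.take_succ, List.getElem?_eq_getElem h]; rfl
  rw [pre, this, endPt_append]
  congr 1
  simp [endPt]

end CSAux
namespace CSAux

lemma okFrom_nil (D : Pt → Prop) (p : Pt) : okFrom D p [] := trivial

lemma okFrom_cons {D : Pt → Prop} {p s : Pt} {l : List Pt} :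
    okFrom D p (s :: l) ↔
      (s = (1, 0) ∨ s = (0, 1) ∨ (s = (1, 1) ∧ D p)) ∧ okFrom D (p + s) l := by
  rfl

lemma okFrom_append {D : Pt → Prop} :
    ∀ (a : List Pt) (b : List Pt) (p : Pt),
      okFrom D p (a ++ b) ↔ okFrom D p a ∧ okFrom D (p + endPt a) b := by
  intro a
  induction a with
  | nil => intro b p; simp [okFrom_nil, okFrom, endPt_nil, Prod.mk_zero_zero]
  | cons s a ih =>
      intro b p
      rw [List.cons_append, okFrom_cons, okFrom_cons, ih, endPt_cons, and_assoc,
        ← add_assoc]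

lemma okFrom_shift {D : Pt → Prop} :
    ∀ (l : List Pt) (p v : Pt),
      okFrom D (p + v) l ↔ okFrom (fun q => D (q + v)) p l := by
  intro l
  induction l with
  | nil => intro p v; simp [okFrom_nil, okFrom]
  | cons s l ih =>
      intro p v
      rw [okFrom_cons, okFrom_cons, add_right_comm p v s, ih]

lemma okFrom_congr {D₁ D₂ : Pt → Prop} :
    ∀ (l : List Pt) (p : Pt),
      (∀ i, i < l.length → (D₁ (p + pre l i) ↔ D₂ (p + pre l i))) →
      (okFrom D₁ p l ↔ okFrom D₂ p l) := by
  intro l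
  induction l with
  | nil => intro p _; simp [okFrom_nil, okFrom]
  | cons s l ih =>
      intro p h
      rw [okFrom_cons, okFrom_cons]
      have h0 : D₁ p ↔ D₂ p := by
        have := h 0 (by simp)
        simpa [pre_zero, Prod.mk_zero_zero] using this
      have hrest : okFrom D₁ (p + s) l ↔ okFrom D₂ (p + s) l := by
        apply ih
        intro i hi
        have := h (i + 1) (by simpa using Nat.succ_lt_succ hi)
        rw [pre_cons, ← add_assoc] at this
        exact this
      rw [h0, hrest]

lemma okFrom_steps {D : Pt → Prop} :
    ∀ {l : List Pt} {p : Pt}, okFrom D p l →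
      ∀ s ∈ l, s = (1, 0) ∨ s = (0, 1) ∨ s = (1, 1) := by
  intro l
  induction l with
  | nil => intro p _ s hs; simp at hs
  | cons a l ih =>
      intro p hok s hs
      rw [okFrom_cons] at hok
      rw [List.mem_cons] at hs
      rcases hs with rfl | hs
      · rcases hok.1 with h | h | h
        exacts [Or.inl h, Or.inr (Or.inl h), Or.inr (Or.inr h.1)]
      · exact ih hok.2 s hs

end CSAux
namespace CSAux

def good (s : Pt) : Prop := s = (1, 0) ∨ s = (0, 1) ∨ s = (1, 1)

lemma endPt_bounds : ∀ {m : List Pt}, (∀ s ∈ m, good s) →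
    0 ≤ (endPt m).1 ∧ 0 ≤ (endPt m).2 ∧ (m.length : ℤ) ≤ (endPt m).1 + (endPt m).2 := by
  intro m
  induction m with
  | nil => intro _; simp [endPt_nil]
  | cons s l ih =>
      intro h
      have hs : good s := h s (by simp)
      have hl := ih (fun t ht => h t (by simp [ht]))
      rw [endPt_cons]
      rcases hs with rfl | rfl | rfl <;>
        simp only [Prod.fst_add, Prod.snd_add, List.length_cons] <;>
        push_cast <;> omega

/-- The main path sets, with positions tracked by prefix sums. -/
def PathSet (D R : Pt → Prop) (n : ℕ) : Set (List Pt) :=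
  {l | okFrom D (0, 0) l ∧ endPt l = ((n : ℤ), (n : ℤ)) ∧ ∀ i ≤ l.length, R (pre l i)}

/-- Paths touching the diagonal only at the two endpoints. -/
def Prim (D R : Pt → Prop) (k : ℕ) : Set (List Pt) :=
  {l | l ∈ PathSet D R k ∧ ∀ i, 0 < i → i < l.length → (pre l i).1 ≠ (pre l i).2}

lemma steps_of_mem {D R : Pt → Prop} {n : ℕ} {l : List Pt} (h : l ∈ PathSet D R n) :
    ∀ s ∈ l, good s := by
  have h0 : okFrom D ((0 : ℤ), (0 : ℤ)) l := h.1
  exact okFrom_steps h0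

lemma length_le_of_mem {D R : Pt → Prop} {n : ℕ} {l : List Pt} (h : l ∈ PathSet D R n) :
    l.length ≤ 2 * n := by
  have hb := endPt_bounds (steps_of_mem h)
  rw [h.2.1] at hb
  have := hb.2.2
  have h2 : (l.length : ℤ) ≤ 2 * n := by push_cast; linarith
  exact_mod_cast h2

lemma finite_pathLike (m : ℕ) :
    {l : List Pt | (∀ s ∈ l, good s) ∧ l.length ≤ m}.Finite := by
  classical
  set enc : Fin 3 → Pt := ![(1, 0), (0, 1), (1, 1)] with henc
  set dec : Pt → Fin 3 := fun p => if p = (1, 0) then 0 else if p = (0, 1) then 1 else 2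
    with hdec
  have hsub : {l : List Pt | (∀ s ∈ l, good s) ∧ l.length ≤ m} ⊆
      (List.map enc) '' {u : List (Fin 3) | u.length ≤ m} := by
    rintro l ⟨hg, hlen⟩
    refine ⟨l.map dec, by simpa using hlen, ?_⟩
    rw [List.map_map]
    refine List.map_congr_left (fun s hs => ?_) |>.trans l.map_id
    rcases hg s hs with rfl | rfl | rfl <;> norm_num [henc, hdec, Prod.ext_iff] <;> exact ⟨rfl, rfl⟩
  exact Set.Finite.subset ((List.finite_length_le (Fin 3) m).image _) hsub

lemma pathSet_finite (D R : Pt → Prop) (n : ℕ) : (PathSet D R n).Finite := by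
  refine Set.Finite.subset (finite_pathLike (2 * n)) ?_
  intro l hl
  exact ⟨steps_of_mem hl, length_le_of_mem hl⟩

lemma prim_finite (D R : Pt → Prop) (k : ℕ) : (Prim D R k).Finite :=
  Set.Finite.subset (pathSet_finite D R k) (fun _ h => h.1)

lemma pathSet_zero {D R : Pt → Prop} (hR0 : R (0, 0)) :
    PathSet D R 0 = {[]} := by
  ext l
  constructor
  · intro hl
    have hb := endPt_bounds (steps_of_mem hl)
    rw [hl.2.1] at hb
    have : (l.length : ℤ) ≤ 0 := by simpa using hb.2.2
    have : l.length = 0 := by exact_mod_cast le_antisymm (by exact_mod_cast this) (Nat.zero_le _)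
    simpa [List.length_eq_zero_iff] using this
  · rintro rfl
    refine ⟨okFrom_nil _ _, by simp [endPt_nil], ?_⟩
    intro i hi
    have hi0 : i = 0 := Nat.le_zero.mp (by simpa using hi)
    subst hi0
    simpa [pre_zero] using hR0

lemma pathSet_congr {D₁ D₂ R₁ R₂ : Pt → Prop} (n : ℕ)
    (hD : ∀ p, R₁ p → (D₁ p ↔ D₂ p)) (hR : ∀ p, R₁ p ↔ R₂ p) :
    PathSet D₁ R₁ n = PathSet D₂ R₂ n := by
  ext l
  constructor
  · rintro ⟨hok, he, hreg⟩
    refine ⟨?_, he, fun i hi => (hR _).1 (hreg i hi)⟩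
    rw [← okFrom_congr l (0, 0) ?_]
    · exact hok
    · intro i hi
      have : ((0 : ℤ), (0 : ℤ)) + pre l i = pre l i := by simp
      rw [this]
      exact hD _ (hreg i (le_of_lt hi))
  · rintro ⟨hok, he, hreg⟩
    refine ⟨?_, he, fun i hi => (hR _).2 (hreg i hi)⟩
    rw [okFrom_congr l (0, 0) ?_]
    · exact hok
    · intro i hi
      have : ((0 : ℤ), (0 : ℤ)) + pre l i = pre l i := by simp
      rw [this]
      exact hD _ ((hR _).2 (hreg i (le_of_lt hi)))

end CSAux
namespace CSAux

lemma ncard_biUnion {α ι : Type*} (s : Finset ι) (f : ι → Set α)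
    (hf : ∀ i ∈ s, (f i).Finite)
    (hd : ∀ i ∈ s, ∀ j ∈ s, i ≠ j → Disjoint (f i) (f j)) :
    (⋃ i ∈ s, f i).ncard = ∑ i ∈ s, (f i).ncard := by
  classical
  induction s using Finset.induction with
  | empty => simp
  | insert a s hnotmem ih =>
      rw [Finset.sum_insert hnotmem, Finset.set_biUnion_insert]
      rw [Set.ncard_union_eq ?_ (hf a (Finset.mem_insert_self a s)) ?_, ih (fun i hi => hf i (Finset.mem_insert_of_mem hi))
        (fun i hi j hj hij => hd i (Finset.mem_insert_of_mem hi) j (Finset.mem_insert_of_mem hj) hij)]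
      · simp only [Set.disjoint_iUnion_right]
        intro i hi
        exact hd a (Finset.mem_insert_self a s) i (Finset.mem_insert_of_mem hi)
          (fun h => hnotmem (h ▸ hi))
      · exact Set.Finite.biUnion s.finite_toSet (fun i hi => hf i (Finset.mem_insert_of_mem hi))

lemma card_prod_sets {α β : Type*} (s : Set α) (t : Set β) :
    Nat.card ↥(s ×ˢ t) = Nat.card s * Nat.card t := by
  rw [Nat.card_congr (Equiv.Set.prod s t), Nat.card_prod]

lemma take_eq_take_append {l : List Pt} {i j : ℕ} (hij : i ≤ j) :
    l.take j = l.take i ++ (l.take j).drop i := by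
  conv_lhs => rw [← List.take_append_drop i (l.take j)]
  rw [List.take_take, min_eq_left hij]

lemma pre_sub {l : List Pt} (hg : ∀ s ∈ l, good s) {i j : ℕ} (hij : i ≤ j)
    (hj : j ≤ l.length) :
    (pre l i).1 ≤ (pre l j).1 ∧ (pre l i).2 ≤ (pre l j).2 ∧
      ((j : ℤ) - i) ≤ ((pre l j).1 - (pre l i).1) + ((pre l j).2 - (pre l i).2) := by
  have hsplit := take_eq_take_append (l := l) hij
  have hpre : pre l j = pre l i + endPt ((l.take j).drop i) := by
    rw [pre, pre]
    conv_lhs => rw [hsplit]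
    exact endPt_append _ _
  have hgood : ∀ s ∈ (l.take j).drop i, good s := by
    intro s hs
    exact hg s (List.mem_of_mem_take (List.mem_of_mem_drop hs))
  have hb := endPt_bounds hgood
  have hlen : ((l.take j).drop i).length = j - i := by
    simp [List.length_drop, List.length_take, min_eq_left hj]
  rw [hlen] at hb
  rw [hpre]
  simp only [Prod.fst_add, Prod.snd_add]
  have hcast : ((j - i : ℕ) : ℤ) = (j : ℤ) - i := by
    rw [Nat.cast_sub hij]
  rw [hcast] at hb
  refine ⟨by linarith [hb.1], by linarith [hb.2.1], by linarith [hb.2.2]⟩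

lemma pre_bounds {D R : Pt → Prop} {n : ℕ} {l : List Pt} (h : l ∈ PathSet D R n)
    {i : ℕ} (hi : i ≤ l.length) :
    0 ≤ (pre l i).1 ∧ 0 ≤ (pre l i).2 ∧ (pre l i).1 ≤ n ∧ (pre l i).2 ≤ n ∧
      (i : ℤ) ≤ (pre l i).1 + (pre l i).2 := by
  have h1 := pre_sub (steps_of_mem h) (Nat.zero_le i) hi
  have h2 := pre_sub (steps_of_mem h) hi le_rfl
  rw [pre_length, h.2.1] at h2
  rw [pre_zero] at h1
  push_cast at h1 h2
  refine ⟨h1.1, h1.2.1, h2.1, h2.2.1, by linarith [h1.2.2]⟩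

lemma pre_take (l : List Pt) (t : ℕ) {i : ℕ} (hi : i ≤ t) :
    pre (l.take t) i = pre l i := by
  rw [pre, pre, List.take_take, min_eq_left hi]

lemma prim_length_pos {D R : Pt → Prop} {k : ℕ} (hk : 1 ≤ k) {l : List Pt}
    (h : l ∈ Prim D R k) : 0 < l.length := by
  rcases Nat.eq_zero_or_pos l.length with h0 | h0
  · exfalso
    have : l = [] := List.length_eq_zero_iff.mp h0
    subst this
    have := h.1.2.1
    rw [endPt_nil] at this
    have : (k : ℤ) = 0 := by
      have := congrArg Prod.fst this
      simpa using this.symm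
    omega
  · exact h0

lemma prim_split {D R : Pt → Prop} {k k' : ℕ} (hk : 1 ≤ k) (hk' : 1 ≤ k')
    {l₁ l₂ m₁ m₂ : List Pt} (h₁ : l₁ ∈ Prim D R k) (hm₁ : m₁ ∈ Prim D R k')
    (heq : l₁ ++ l₂ = m₁ ++ m₂) : k = k' ∧ l₁ = m₁ ∧ l₂ = m₂ := by
  have hlen₁ := prim_length_pos hk h₁
  have hlenm := prim_length_pos hk' hm₁
  have hL : l₁.length = m₁.length := by
    by_contra hne
    rcases Nat.lt_or_ge l₁.length m₁.length with hlt | hge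
    · -- pre (m₁ ++ m₂) at l₁.length is endPt l₁ = (k,k), contradicting prim of m₁
      have e1 : pre (l₁ ++ l₂) l₁.length = endPt l₁ := by
        rw [pre_append_left _ le_rfl, pre_length]
      have e2 : pre (m₁ ++ m₂) l₁.length = pre m₁ l₁.length := by
        rw [pre_append_left _ (le_of_lt hlt)]
      have := hm₁.2 l₁.length hlen₁ hlt
      rw [← e2, ← heq, e1, h₁.1.2.1] at this
      exact this rfl
    · rcases Nat.lt_or_ge m₁.length l₁.length with hlt2 | hge2
      · have e1 : pre (m₁ ++ m₂) m₁.length = endPt m₁ := by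
          rw [pre_append_left _ le_rfl, pre_length]
        have e2 : pre (l₁ ++ l₂) m₁.length = pre l₁ m₁.length := by
          rw [pre_append_left _ (le_of_lt hlt2)]
        have := h₁.2 m₁.length hlenm hlt2
        rw [← e2, heq, e1, hm₁.1.2.1] at this
        exact this rfl
      · omega
  have hl₁ : l₁ = m₁ := by
    have : (l₁ ++ l₂).take l₁.length = (m₁ ++ m₂).take m₁.length := by rw [heq, hL]
    rwa [List.take_left, List.take_left] at this
  have hl₂ : l₂ = m₂ := by
    have : (l₁ ++ l₂).drop l₁.length = (m₁ ++ m₂).drop m₁.length := by rw [heq, hL]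
    rwa [List.drop_left, List.drop_left] at this
  have hkk : k = k' := by
    have : endPt l₁ = endPt m₁ := by rw [hl₁]
    rw [h₁.1.2.1, hm₁.1.2.1] at this
    have := congrArg Prod.fst this
    simpa using this
  exact ⟨hkk, hl₁, hl₂⟩

end CSAux
namespace CSAux

section Master

variable {D R : Pt → Prop}
variable (hD : ∀ (p : Pt) (a : ℤ), D (p.1 + a, p.2 + a) ↔ D p)
variable (hR : ∀ (p : Pt) (a : ℤ), R (p.1 + a, p.2 + a) ↔ R p)
variable (hR0 : R (0, 0))

include hD in
lemma shift_D_eq (a : ℤ) : (fun q : Pt => D (q + (a, a))) = D := by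
  funext q
  exact propext (hD q a)

include hD hR hR0 in
lemma append_mem {n k : ℕ} (hk1 : 1 ≤ k) (hkn : k ≤ n) {l₁ l₂ : List Pt}
    (h₁ : l₁ ∈ Prim D R k) (h₂ : l₂ ∈ PathSet D R (n - k)) :
    l₁ ++ l₂ ∈ PathSet D R n := by
  obtain ⟨⟨hok₁, hend₁, hreg₁⟩, hprim₁⟩ := h₁
  obtain ⟨hok₂, hend₂, hreg₂⟩ := h₂
  have hcast : ((n - k : ℕ) : ℤ) = (n : ℤ) - (k : ℤ) := by
    rw [Nat.cast_sub hkn]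
  refine ⟨?_, ?_, ?_⟩
  · rw [okFrom_append]
    refine ⟨hok₁, ?_⟩
    have hz : ((0 : ℤ), (0 : ℤ)) + endPt l₁ = ((0 : ℤ), (0 : ℤ)) + ((k : ℤ), (k : ℤ)) := by
      rw [hend₁]
    rw [hz, okFrom_shift, shift_D_eq hD]
    exact hok₂
  · rw [endPt_append, hend₁, hend₂, Prod.mk_add_mk, hcast, Prod.mk.injEq]
    constructor <;> ring
  · intro i hi
    rcases le_or_gt i l₁.length with hil | hil
    · rw [pre_append_left _ hil]
      exact hreg₁ i hil
    · have hj : i = l₁.length + (i - l₁.length) := by omega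
      rw [hj, pre_append_right, hend₁]
      have := hreg₂ (i - l₁.length) (by rw [List.length_append] at hi; omega)
      have hR' := hR (pre l₂ (i - l₁.length)) k
      rw [Prod.mk_add_mk]
      rw [show ((k : ℤ) + (pre l₂ (i - l₁.length)).1, (k : ℤ) + (pre l₂ (i - l₁.length)).2)
        = ((pre l₂ (i - l₁.length)).1 + k, (pre l₂ (i - l₁.length)).2 + k) by
          rw [Prod.mk.injEq]; constructor <;> ring]
      exact hR'.mpr this

include hD hR hR0 in
lemma pathSet_eq_biUnion {n : ℕ} (hn : 1 ≤ n) :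
    PathSet D R n = ⋃ k ∈ Finset.Icc 1 n,
      (fun pr : List Pt × List Pt => pr.1 ++ pr.2) ''
        ((Prim D R k) ×ˢ (PathSet D R (n - k))) := by
  classical
  ext l
  constructor
  · intro hl
    obtain ⟨hok, hend, hreg⟩ := hl
    -- find first diagonal touch
    have hlpos : 0 < l.length := by
      rcases Nat.eq_zero_or_pos l.length with h0 | h0
      · exfalso
        have : l = [] := List.length_eq_zero_iff.mp h0
        subst this
        rw [endPt_nil] at hend
        have : (n : ℤ) = 0 := (congrArg Prod.fst hend).symm
        omega
      · exact h0
    have hex : ∃ i, 1 ≤ i ∧ (pre l i).1 = (pre l i).2 := by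
      refine ⟨l.length, hlpos, ?_⟩
      rw [pre_length, hend]
    let t := Nat.find hex
    have ht : 1 ≤ t ∧ (pre l t).1 = (pre l t).2 := Nat.find_spec hex
    have htmin : ∀ i, i < t → ¬(1 ≤ i ∧ (pre l i).1 = (pre l i).2) :=
      fun i hi => Nat.find_min hex hi
    have htle : t ≤ l.length := Nat.find_min' hex ⟨hlpos, by rw [pre_length, hend]⟩
    have hbnd := pre_bounds ⟨hok, hend, hreg⟩ htle
    set c : ℤ := (pre l t).1 with hc
    have hcpos : 1 ≤ c := by
      have h2 : (t : ℤ) ≤ c + c := by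
        have := hbnd.2.2.2.2
        rw [← ht.2] at this
        exact this
      have : (1 : ℤ) ≤ (t : ℤ) := by exact_mod_cast ht.1
      omega
    have hcn : c ≤ n := hbnd.2.2.1
    set k : ℕ := c.toNat with hk
    have hck : (k : ℤ) = c := Int.toNat_of_nonneg (by omega)
    have hk1 : 1 ≤ k := by omega
    have hkn : k ≤ n := by
      have : (k : ℤ) ≤ (n : ℤ) := by rw [hck]; exact hcn
      exact_mod_cast this
    have hpret : pre l t = ((k : ℤ), (k : ℤ)) := by
      rw [Prod.ext_iff]
      refine ⟨by rw [hck], by rw [hck]; exact ht.2.symm⟩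
    have hlen₁ : (l.take t).length = t := by
      rw [List.length_take, min_eq_left htle]
    have hokapp := (okFrom_append (D := D) (l.take t) (l.drop t) ((0 : ℤ), (0 : ℤ)))
    rw [List.take_append_drop] at hokapp
    have hoks := hokapp.mp hok
    have hend₁ : endPt (l.take t) = ((k : ℤ), (k : ℤ)) := by
      rw [← pre_length, hlen₁, pre_take l t le_rfl, hpret]
    have hmem₁ : l.take t ∈ Prim D R k := by
      refine ⟨⟨hoks.1, hend₁, ?_⟩, ?_⟩
      · intro i hi
        rw [hlen₁] at hi
        rw [pre_take l t hi]
        exact hreg i (le_trans hi htle)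
      · intro i hipos hilt
        rw [hlen₁] at hilt
        rw [pre_take l t (le_of_lt hilt)]
        have := htmin i hilt
        intro hdiag
        exact this ⟨hipos, hdiag⟩
    have hmem₂ : l.drop t ∈ PathSet D R (n - k) := by
      refine ⟨?_, ?_, ?_⟩
      · have h2 := hoks.2
        rw [hend₁] at h2
        have hz : ((0 : ℤ), (0 : ℤ)) + ((k : ℤ), (k : ℤ)) =
            ((0 : ℤ), (0 : ℤ)) + ((k : ℤ), (k : ℤ)) := rfl
        rw [okFrom_shift, shift_D_eq hD] at h2
        exact h2
      · have : endPt l = endPt (l.take t) + endPt (l.drop t) := by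
          conv_lhs => rw [← List.take_append_drop t l]
          exact endPt_append _ _
        rw [hend, hend₁] at this
        have hcast : ((n - k : ℕ) : ℤ) = (n : ℤ) - (k : ℤ) := by rw [Nat.cast_sub hkn]
        rw [Prod.ext_iff] at this ⊢
        simp only [Prod.fst_add, Prod.snd_add] at this
        constructor
        · rw [hcast]; omega
        · rw [hcast]; omega
      · intro j hj
        have hlen₂ : (l.drop t).length = l.length - t := List.length_drop
        have happ : pre l (t + j) = endPt (l.take t) + pre (l.drop t) j := by
          have h := pre_append_right (l.take t) (l.drop t) j
          rw [List.take_append_drop, hlen₁] at h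
          exact h
        have hregtj := hreg (t + j) (by omega)
        rw [happ, hend₁] at hregtj
        have hR' := hR (pre (l.drop t) j) k
        rw [Prod.mk_add_mk] at hregtj
        rw [show ((k : ℤ) + (pre (l.drop t) j).1, (k : ℤ) + (pre (l.drop t) j).2)
          = ((pre (l.drop t) j).1 + k, (pre (l.drop t) j).2 + k) by
            rw [Prod.mk.injEq]; constructor <;> ring] at hregtj
        exact hR'.mp hregtj
    refine Set.mem_biUnion (Finset.mem_Icc.mpr ⟨hk1, hkn⟩) ?_
    exact ⟨(l.take t, l.drop t), Set.mk_mem_prod hmem₁ hmem₂, List.take_append_drop t l⟩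
  · intro hl
    simp only [Set.mem_iUnion, exists_prop] at hl
    obtain ⟨k, hkmem, ⟨l₁, l₂⟩, hpr, rfl⟩ := hl
    rw [Finset.mem_Icc] at hkmem
    exact append_mem hD hR hR0 hkmem.1 hkmem.2 hpr.1 hpr.2

end Master

end CSAux
namespace CSAux

section Master2

variable {D R : Pt → Prop}
variable (hD : ∀ (p : Pt) (a : ℤ), D (p.1 + a, p.2 + a) ↔ D p)
variable (hR : ∀ (p : Pt) (a : ℤ), R (p.1 + a, p.2 + a) ↔ R p)
variable (hR0 : R (0, 0))

include hD hR hR0 in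
theorem card_master {n : ℕ} (hn : 1 ≤ n) :
    Nat.card (PathSet D R n) =
      ∑ k ∈ Finset.Icc 1 n, Nat.card (Prim D R k) * Nat.card (PathSet D R (n - k)) := by
  classical
  rw [Nat.card_coe_set_eq, pathSet_eq_biUnion hD hR hR0 hn]
  have hfin : ∀ k ∈ Finset.Icc 1 n, ((fun pr : List Pt × List Pt => pr.1 ++ pr.2) ''
      ((Prim D R k) ×ˢ (PathSet D R (n - k)))).Finite :=
    fun k _ => (((prim_finite D R k).prod (pathSet_finite D R (n - k))).image _)
  rw [ncard_biUnion _ _ hfin ?_]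
  · refine Finset.sum_congr rfl (fun k hk => ?_)
    rw [Finset.mem_Icc] at hk
    rw [Set.ncard_image_of_injOn ?_, ← Nat.card_coe_set_eq, card_prod_sets]
    rintro ⟨a₁, a₂⟩ ha ⟨b₁, b₂⟩ hb h
    obtain ⟨-, e1, e2⟩ := prim_split hk.1 hk.1 ha.1 hb.1 h
    rw [Prod.mk.injEq]
    exact ⟨e1, e2⟩
  · intro i hi j hj hij
    rw [Finset.mem_Icc] at hi hj
    rw [Set.disjoint_left]
    rintro l ⟨⟨a₁, a₂⟩, ha, rfl⟩ ⟨⟨b₁, b₂⟩, hb, heqb⟩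
    obtain ⟨e, -, -⟩ := prim_split hj.1 hi.1 hb.1 ha.1 heqb
    exact hij e.symm

end Master2

end CSAux
namespace CSAux

def Ep : Pt := ((1 : ℤ), (0 : ℤ))
def Np : Pt := ((0 : ℤ), (1 : ℤ))
def Dp : Pt := ((1 : ℤ), (1 : ℤ))

/-- Primitive paths whose first step is (1,0). -/
def EHead (D R : Pt → Prop) (k : ℕ) : Set (List Pt) :=
  {l | l ∈ Prim D R k ∧ l.head? = some Ep}

lemma endPt_singleton (b : Pt) : endPt [b] = b := by
  simp [endPt]

section Peel

variable {D R : Pt → Prop}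
variable (hR : ∀ (p : Pt) (a : ℤ), R (p.1 + a, p.2 + a) ↔ R p)
variable (hR0 : R (0, 0))

include hR hR0 in
theorem card_eHead {k : ℕ} (hk : 1 ≤ k)
    (hBelow : ∀ l ∈ EHead D R k, ∀ i, 0 < i → i < l.length →
      (pre l i).2 < (pre l i).1) :
    Nat.card (EHead D R k) =
      Nat.card (PathSet (fun q => D (q + Ep)) (fun q => R (q + Ep) ∧ q.2 ≤ q.1) (k - 1)) := by
  classical
  set D' : Pt → Prop := fun q => D (q + Ep) with hD'
  set R' : Pt → Prop := fun q => R (q + Ep) ∧ q.2 ≤ q.1 with hR'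
  have hkz : ((k - 1 : ℕ) : ℤ) = (k : ℤ) - 1 := by
    rw [Nat.cast_sub hk]; norm_num
  have himg : EHead D R k = (fun m => Ep :: (m ++ [Np])) '' PathSet D' R' (k - 1) := by
    ext l
    constructor
    · rintro ⟨hprim, hhead⟩
      obtain ⟨⟨hok, hend, hreg⟩, hdiag⟩ := hprim
      -- l = Ep :: rest
      obtain ⟨s, rest, rfl⟩ : ∃ s rest, l = s :: rest := by
        cases l with
        | nil => simp at hhead
        | cons a r => exact ⟨a, r, rfl⟩
      have hsE : s = Ep := by simpa using hhead
      subst hsE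
      -- rest is nonempty
      have hrest_ne : rest ≠ [] := by
        rintro rfl
        rw [endPt_cons, endPt_nil] at hend
        have := congrArg Prod.snd hend
        simp [Ep] at this
        omega
      obtain ⟨m, b, hmb⟩ := rest.eq_nil_or_concat.resolve_left hrest_ne
      rw [List.concat_eq_append] at hmb
      subst hmb
      have hlen : (Ep :: (m ++ [b])).length = m.length + 2 := by simp
      -- identify the position before the last step
      have hpre_last : pre (Ep :: (m ++ [b])) (m.length + 1) = Ep + endPt m := by
        rw [pre_cons, pre_append_left _ le_rfl, pre_length]
      have hgood_b : good b := okFrom_steps hok b (by simp)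
      have hend' : ((k : ℤ), (k : ℤ)) = Ep + (endPt m + b) := by
        rw [← hend, endPt_cons, endPt_append, endPt_singleton]
      have hbel := hBelow _ ⟨⟨⟨hok, hend, hreg⟩, hdiag⟩, rfl⟩ (m.length + 1)
        (Nat.succ_pos _) (by omega)
      rw [hpre_last] at hbel
      have hbN : b = Np ∧ endPt m = ((k : ℤ) - 1, (k : ℤ) - 1) := by
        rcases hgood_b with rfl | rfl | rfl
        · exfalso
          have h1 := congrArg Prod.fst hend'
          have h2 := congrArg Prod.snd hend'
          simp [Ep] at h1 h2
          simp [Ep] at hbel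
          omega
        · constructor
          · rfl
          · have h1 := congrArg Prod.fst hend'
            have h2 := congrArg Prod.snd hend'
            simp [Ep, Np] at h1 h2
            rw [Prod.ext_iff]
            exact ⟨by omega, by omega⟩
        · exfalso
          have h1 := congrArg Prod.fst hend'
          have h2 := congrArg Prod.snd hend'
          simp [Ep, Dp] at h1 h2
          simp [Ep] at hbel
          omega
      obtain ⟨rfl, hendm⟩ := hbN
      refine ⟨m, ?_, rfl⟩
      -- m ∈ PathSet D' R' (k-1)
      have hpre_m : ∀ i, i ≤ m.length →
          pre (Ep :: (m ++ [Np])) (i + 1) = Ep + pre m i := by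
        intro i hi
        rw [pre_cons, pre_append_left _ hi]
      refine ⟨?_, ?_, ?_⟩
      · rw [okFrom_cons] at hok
        have h2 := hok.2
        rw [okFrom_append] at h2
        have h3 := h2.1
        have : ((0 : ℤ), (0 : ℤ)) + Ep = ((0 : ℤ), (0 : ℤ)) + Ep := rfl
        rw [show ((0 : ℤ), (0 : ℤ)) + Ep = (((0 : ℤ), (0 : ℤ)) + Ep) from rfl] at h3
        rw [okFrom_shift] at h3
        exact h3
      · rw [hendm, hkz]
      · intro i hi
        have hR1 : R (pre m i + Ep) := by
          have := hreg (i + 1) (by simp; omega)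
          rw [hpre_m i hi, add_comm Ep (pre m i)] at this
          exact this
        have hR2 : (pre m i).2 ≤ (pre m i).1 := by
          have := hBelow _ ⟨⟨⟨hok, hend, hreg⟩, hdiag⟩, rfl⟩ (i + 1)
            (Nat.succ_pos _) (by omega)
          rw [hpre_m i hi] at this
          simp [Ep] at this
          omega
        exact ⟨hR1, hR2⟩
    · rintro ⟨m, ⟨hok, hend, hreg⟩, rfl⟩
      have hpre_m : ∀ i, i ≤ m.length →
          pre (Ep :: (m ++ [Np])) (i + 1) = Ep + pre m i := by
        intro i hi
        rw [pre_cons, pre_append_left _ hi]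
      have hlen : (Ep :: (m ++ [Np])).length = m.length + 2 := by simp
      have hendl : endPt (Ep :: (m ++ [Np])) = ((k : ℤ), (k : ℤ)) := by
        rw [endPt_cons, endPt_append, endPt_singleton, hend, hkz]
        rw [Prod.ext_iff]
        refine ⟨?_, ?_⟩ <;> simp [Ep, Np] <;> ring
      have hfull : pre (Ep :: (m ++ [Np])) (m.length + 2) = ((k : ℤ), (k : ℤ)) := by
        rw [← hlen, pre_length, hendl]
      have hpre_all : ∀ i, i ≤ m.length + 2 → i ≠ 0 → i ≠ m.length + 2 →
          pre (Ep :: (m ++ [Np])) i = Ep + pre m (i - 1) ∧ i - 1 ≤ m.length := by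
        intro i hi h0 h2
        obtain ⟨j, rfl⟩ : ∃ j, i = j + 1 := ⟨i - 1, by omega⟩
        have hj : j ≤ m.length := by omega
        exact ⟨by rw [hpre_m j hj]; simp, by omega⟩
      refine ⟨⟨⟨?_, hendl, ?_⟩, ?_⟩, rfl⟩
      · rw [okFrom_cons]
        refine ⟨Or.inl rfl, ?_⟩
        rw [okFrom_append]
        constructor
        · rw [okFrom_shift]
          exact hok
        · rw [okFrom_cons]
          exact ⟨Or.inr (Or.inl rfl), trivial⟩
      · intro i hi
        rcases Nat.eq_zero_or_pos i with rfl | hipos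
        · simpa [pre_zero] using hR0
        rcases Nat.eq_or_lt_of_le hi with heq | hlt
        · rw [hlen] at heq
          rw [heq, hfull]
          have := (hR ((0 : ℤ), (0 : ℤ)) (k : ℤ)).mpr hR0
          simpa using this
        · rw [hlen] at hlt hi
          obtain ⟨hpre_i, hj⟩ := hpre_all i (by omega) (by omega) (by omega)
          rw [hpre_i]
          have := (hreg (i - 1) hj).1
          rw [add_comm Ep (pre m (i - 1))]
          exact this
      · intro i hipos hilt
        rw [hlen] at hilt
        obtain ⟨hpre_i, hj⟩ := hpre_all i (by omega) (by omega) (by omega)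
        rw [hpre_i]
        have := (hreg (i - 1) hj).2
        simp [Ep]
        omega
  rw [himg, Nat.card_coe_set_eq, Nat.card_coe_set_eq,
    Set.ncard_image_of_injOn ?_]
  intro a _ b _ h
  simp only [List.cons.injEq, List.append_left_inj] at h
  exact h.2

end Peel

end CSAux
namespace CSAux

def NHead (D R : Pt → Prop) (k : ℕ) : Set (List Pt) :=
  {l | l ∈ Prim D R k ∧ l.head? = some Np}

def DHead (D R : Pt → Prop) (k : ℕ) : Set (List Pt) :=
  {l | l ∈ Prim D R k ∧ l.head? = some Dp}

def rev (l : List Pt) : List Pt := l.map Prod.swap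

lemma rev_length (l : List Pt) : (rev l).length = l.length := by simp [rev]

lemma endPt_rev (l : List Pt) : endPt (rev l) = ((endPt l).2, (endPt l).1) := by
  simp [endPt, rev, List.map_map, Function.comp_def]

lemma pre_rev (l : List Pt) (i : ℕ) : pre (rev l) i = ((pre l i).2, (pre l i).1) := by
  rw [pre, pre, rev, ← List.map_take]
  exact endPt_rev _

lemma okFrom_rev {D : Pt → Prop} :
    ∀ {l : List Pt} {p : Pt}, okFrom D p l →
      okFrom (fun q => D (q.2, q.1)) (p.2, p.1) (rev l) := by
  intro l
  induction l with
  | nil => intro p _; exact okFrom_nil _ _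
  | cons s l ih =>
      intro p h
      rw [okFrom_cons] at h
      rw [rev, List.map_cons, okFrom_cons]
      constructor
      · rcases h.1 with rfl | rfl | ⟨rfl, hD⟩
        · exact Or.inr (Or.inl rfl)
        · exact Or.inl rfl
        · exact Or.inr (Or.inr ⟨rfl, hD⟩)
      · have := ih h.2
        convert this using 2 <;> simp [Prod.swap, rev]

lemma rev_rev (l : List Pt) : rev (rev l) = l := by
  simp [rev, List.map_map]

lemma rev_injective : Function.Injective rev :=
  fun a b h => by rw [← rev_rev a, h, rev_rev]

lemma rev_mem_prim {D R : Pt → Prop} {k : ℕ} {l : List Pt} (h : l ∈ Prim D R k) :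
    rev l ∈ Prim (fun q => D (q.2, q.1)) (fun q => R (q.2, q.1)) k := by
  obtain ⟨⟨hok, hend, hreg⟩, hdiag⟩ := h
  refine ⟨⟨?_, ?_, ?_⟩, ?_⟩
  · exact okFrom_rev hok
  · rw [endPt_rev, hend]
  · intro i hi
    rw [rev_length] at hi
    rw [pre_rev]
    exact hreg i hi
  · intro i h0 hlen
    rw [rev_length] at hlen
    rw [pre_rev]
    exact (hdiag i h0 hlen).symm

lemma rev_nHead_eq {D R : Pt → Prop} {k : ℕ} :
    rev '' NHead D R k = EHead (fun q => D (q.2, q.1)) (fun q => R (q.2, q.1)) k := by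
  ext l
  constructor
  · rintro ⟨l₀, ⟨hprim, hhead⟩, rfl⟩
    refine ⟨rev_mem_prim hprim, ?_⟩
    cases l₀ with
    | nil => simp at hhead
    | cons s r =>
        have : s = Np := by simpa using hhead
        subst this
        simp [rev, Np, Ep, Prod.swap]
  · rintro ⟨hprim, hhead⟩
    refine ⟨rev l, ⟨?_, ?_⟩, rev_rev l⟩
    · exact rev_mem_prim hprim
    · cases l with
      | nil => simp at hhead
      | cons s r =>
          have : s = Ep := by simpa using hhead
          subst this
          simp [rev, Np, Ep, Prod.swap]

lemma card_nHead {D R : Pt → Prop} {k : ℕ} :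
    Nat.card (NHead D R k) =
      Nat.card (EHead (fun q => D (q.2, q.1)) (fun q => R (q.2, q.1)) k) := by
  rw [← rev_nHead_eq, Nat.card_coe_set_eq, Nat.card_coe_set_eq,
    Set.ncard_image_of_injOn (Set.injOn_of_injective rev_injective)]

lemma crossing {l : List Pt} (hg : ∀ s ∈ l, good s)
    (hdiag : ∀ i, 0 < i → i < l.length → (pre l i).1 ≠ (pre l i).2)
    (h1 : (pre l 1).2 < (pre l 1).1) :
    ∀ i, 0 < i → i < l.length → (pre l i).2 < (pre l i).1 := by
  intro i
  induction i with
  | zero => intro h; omega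
  | succ j ih =>
      intro _ hlt
      rcases Nat.eq_zero_or_pos j with rfl | hj
      · exact h1
      · have hjlt : j < l.length := by omega
        have hbel := ih hj hjlt
        have hstep := pre_succ hjlt
        have hgj : good (l.get ⟨j, hjlt⟩) := hg _ (List.get_mem l ⟨j, hjlt⟩)
        have hne := hdiag (j + 1) (by omega) hlt
        rcases hgj with hgj | hgj | hgj <;>
          rw [hstep, hgj] at hne ⊢ <;>
          simp [Ep, Np, Dp] at hne ⊢ <;> omega

end CSAux
namespace CSAux

lemma prim_eq_union {D R : Pt → Prop} {k : ℕ} (hk : 1 ≤ k) :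
    Prim D R k = EHead D R k ∪ NHead D R k ∪ DHead D R k := by
  ext l
  constructor
  · intro hl
    have hpos := prim_length_pos hk hl
    obtain ⟨s, rest, rfl⟩ : ∃ s rest, l = s :: rest := by
      cases l with
      | nil => simp at hpos
      | cons a r => exact ⟨a, r, rfl⟩
    have hs : good s := okFrom_steps hl.1.1 s (by simp)
    rcases hs with rfl | rfl | rfl
    · exact Or.inl (Or.inl ⟨hl, rfl⟩)
    · exact Or.inl (Or.inr ⟨hl, rfl⟩)
    · exact Or.inr ⟨hl, rfl⟩
  · rintro ((⟨h, -⟩ | ⟨h, -⟩) | ⟨h, -⟩) <;> exact h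

lemma card_prim_split {D R : Pt → Prop} {k : ℕ} (hk : 1 ≤ k) :
    Nat.card (Prim D R k) =
      Nat.card (EHead D R k) + Nat.card (NHead D R k) + Nat.card (DHead D R k) := by
  have hfE : (EHead D R k).Finite := (prim_finite D R k).subset (fun _ h => h.1)
  have hfN : (NHead D R k).Finite := (prim_finite D R k).subset (fun _ h => h.1)
  have hfD : (DHead D R k).Finite := (prim_finite D R k).subset (fun _ h => h.1)
  have hdEN : Disjoint (EHead D R k) (NHead D R k) := by
    rw [Set.disjoint_left]
    rintro l ⟨-, h1⟩ ⟨-, h2⟩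
    rw [h1] at h2
    simp [Ep, Np, Prod.ext_iff] at h2
  have hdED : Disjoint (EHead D R k ∪ NHead D R k) (DHead D R k) := by
    rw [Set.disjoint_left]
    rintro l (⟨-, h1⟩ | ⟨-, h1⟩) ⟨-, h2⟩ <;> rw [h1] at h2 <;>
      simp [Ep, Np, Dp, Prod.ext_iff] at h2
  rw [prim_eq_union hk, Nat.card_coe_set_eq,
    Set.ncard_union_eq hdED (hfE.union hfN) hfD,
    Set.ncard_union_eq hdEN hfE hfN,
    ← Nat.card_coe_set_eq, ← Nat.card_coe_set_eq, ← Nat.card_coe_set_eq]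

lemma nHead_empty {D R : Pt → Prop} {k : ℕ} (hRN : ¬ R ((0 : ℤ), (1 : ℤ))) :
    NHead D R k = ∅ := by
  ext l
  simp only [Set.mem_empty_iff_false, iff_false]
  rintro ⟨⟨⟨hok, hend, hreg⟩, -⟩, hhead⟩
  obtain ⟨s, rest, rfl⟩ : ∃ s rest, l = s :: rest := by
    cases l with
    | nil => simp at hhead
    | cons a r => exact ⟨a, r, rfl⟩
  have hs : s = Np := by simpa using hhead
  subst hs
  have := hreg 1 (by simp)
  rw [pre_cons, pre_zero] at this
  apply hRN
  convert this using 2 <;> simp [Np]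

lemma dHead_empty {D R : Pt → Prop} {k : ℕ} (hD00 : ¬ D ((0 : ℤ), (0 : ℤ))) :
    DHead D R k = ∅ := by
  ext l
  simp only [Set.mem_empty_iff_false, iff_false]
  rintro ⟨⟨⟨hok, hend, hreg⟩, -⟩, hhead⟩
  obtain ⟨s, rest, rfl⟩ : ∃ s rest, l = s :: rest := by
    cases l with
    | nil => simp at hhead
    | cons a r => exact ⟨a, r, rfl⟩
  have hs : s = Dp := by simpa using hhead
  subst hs
  rw [okFrom_cons] at hok
  rcases hok.1 with h | h | h
  · simp [Dp, Prod.ext_iff] at h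
  · simp [Dp, Prod.ext_iff] at h
  · exact hD00 h.2

lemma dHead_eq {D R : Pt → Prop} {k : ℕ} (hk : 1 ≤ k)
    (hD00 : D ((0 : ℤ), (0 : ℤ))) (hR0 : R (0, 0)) (hR11 : R ((1 : ℤ), (1 : ℤ))) :
    DHead D R k = if k = 1 then {[Dp]} else ∅ := by
  ext l
  constructor
  · rintro ⟨⟨⟨hok, hend, hreg⟩, hdiag⟩, hhead⟩
    obtain ⟨s, rest, rfl⟩ : ∃ s rest, l = s :: rest := by
      cases l with
      | nil => simp at hhead
      | cons a r => exact ⟨a, r, rfl⟩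
    have hs : s = Dp := by simpa using hhead
    subst hs
    have hp1 : pre (Dp :: rest) 1 = Dp := by
      rw [pre_cons, pre_zero]
      simp [Dp]
    have hrest : rest = [] := by
      by_contra hne
      have hlen : 1 < (Dp :: rest).length := by
        cases rest with
        | nil => exact absurd rfl hne
        | cons a r => simp
      have := hdiag 1 (by omega) hlen
      rw [hp1] at this
      simp [Dp] at this
    subst hrest
    have hend1 : endPt [Dp] = ((1 : ℤ), (1 : ℤ)) := by simp [endPt, Dp]
    rw [hend1] at hend
    have hk1 : k = 1 := by
      have := congrArg Prod.fst hend
      simp at this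
      exact_mod_cast this.symm
    rw [if_pos hk1]
    rfl
  · intro hl
    by_cases hk1 : k = 1
    · rw [if_pos hk1] at hl
      rw [Set.mem_singleton_iff] at hl
      subst hl
      subst hk1
      refine ⟨⟨⟨?_, ?_, ?_⟩, ?_⟩, rfl⟩
      · rw [okFrom_cons]
        exact ⟨Or.inr (Or.inr ⟨rfl, hD00⟩), trivial⟩
      · simp [endPt, Dp]
      · intro i hi
        simp at hi
        interval_cases i
        · simpa [pre_zero] using hR0
        · rw [pre_cons, pre_zero]
          simpa [Dp] using hR11
      · intro i h0 hlen
        simp at hlen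
        omega
    · rw [if_neg hk1] at hl
      exact absurd hl (Set.notMem_empty _)

lemma card_singleton_list (a : List Pt) : Nat.card ↥({a} : Set (List Pt)) = 1 := by
  rw [Nat.card_coe_set_eq, Set.ncard_singleton]

lemma card_empty_list : Nat.card ↥(∅ : Set (List Pt)) = 0 := by
  simp

lemma card_dHead_eq {D R : Pt → Prop} {k : ℕ} (hk : 1 ≤ k)
    (hD00 : D ((0 : ℤ), (0 : ℤ))) (hR0 : R (0, 0)) (hR11 : R ((1 : ℤ), (1 : ℤ))) :
    Nat.card (DHead D R k) = if k = 1 then 1 else 0 := by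
  rw [dHead_eq hk hD00 hR0 hR11]
  by_cases hk1 : k = 1
  · rw [if_pos hk1, if_pos hk1, card_singleton_list]
  · rw [if_neg hk1, if_neg hk1, card_empty_list]

lemma hBelow_crossing {D R : Pt → Prop} {k : ℕ} :
    ∀ l ∈ EHead D R k, ∀ i, 0 < i → i < l.length → (pre l i).2 < (pre l i).1 := by
  rintro l ⟨⟨⟨hok, hend, hreg⟩, hdiag⟩, hhead⟩
  apply crossing (okFrom_steps hok) hdiag
  obtain ⟨s, rest, rfl⟩ : ∃ s rest, l = s :: rest := by
    cases l with
    | nil => simp at hhead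
    | cons a r => exact ⟨a, r, rfl⟩
  have hs : s = Ep := by simpa using hhead
  subst hs
  rw [pre_cons, pre_zero]
  simp [Ep]

lemma hBelow_of_Rbel {D R : Pt → Prop} {k : ℕ} (hRb : ∀ q, R q → q.2 ≤ q.1) :
    ∀ l ∈ EHead D R k, ∀ i, 0 < i → i < l.length → (pre l i).2 < (pre l i).1 := by
  rintro l ⟨⟨⟨hok, hend, hreg⟩, hdiag⟩, -⟩ i h0 hlen
  have h1 := hRb _ (hreg i (le_of_lt hlen))
  have h2 := hdiag i h0 hlen
  omega

end CSAux
namespace CSAux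

def Dfalse : Pt → Prop := fun _ => False
def Dtrue : Pt → Prop := fun _ => True
def Dle : Pt → Prop := fun p => p.1 ≤ p.2
def Rbel : Pt → Prop := fun p => p.2 ≤ p.1
def Rtop : Pt → Prop := fun _ => True

noncomputable def cC (n : ℕ) : ℕ := Nat.card (PathSet Dfalse Rbel n)
noncomputable def cS (n : ℕ) : ℕ := Nat.card (PathSet Dtrue Rbel n)
noncomputable def cF (n : ℕ) : ℕ := Nat.card (PathSet Dle Rtop n)

lemma inv_Dfalse : ∀ (p : Pt) (a : ℤ), Dfalse (p.1 + a, p.2 + a) ↔ Dfalse p := by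
  intro p a; rfl
lemma inv_Dtrue : ∀ (p : Pt) (a : ℤ), Dtrue (p.1 + a, p.2 + a) ↔ Dtrue p := by
  intro p a; rfl
lemma inv_Dle : ∀ (p : Pt) (a : ℤ), Dle (p.1 + a, p.2 + a) ↔ Dle p := by
  intro p a; simp only [Dle]; omega
lemma inv_Rbel : ∀ (p : Pt) (a : ℤ), Rbel (p.1 + a, p.2 + a) ↔ Rbel p := by
  intro p a; simp only [Rbel]; omega
lemma inv_Rtop : ∀ (p : Pt) (a : ℤ), Rtop (p.1 + a, p.2 + a) ↔ Rtop p := by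
  intro p a; rfl
lemma Rbel_zero : Rbel (0, 0) := le_refl _
lemma Rtop_zero : Rtop (0, 0) := trivial

lemma card_zero {D R : Pt → Prop} (hR0 : R (0, 0)) : Nat.card (PathSet D R 0) = 1 := by
  rw [pathSet_zero hR0, card_singleton_list]

lemma cC_zero : cC 0 = 1 := card_zero Rbel_zero
lemma cS_zero : cS 0 = 1 := card_zero Rbel_zero
lemma cF_zero : cF 0 = 1 := card_zero Rtop_zero

/-- primitive-count for the Catalan lattice -/
lemma congr_CS (D : Pt → Prop) (m : ℕ) :
    PathSet (fun q => D (q + Ep)) (fun q => Rbel (q + Ep) ∧ q.2 ≤ q.1) m =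
      PathSet (fun q => D (q + Ep)) Rbel m := by
  apply pathSet_congr
  · intro p _
    exact Iff.rfl
  · intro p
    simp only [Rbel, Prod.snd_add, Prod.fst_add, Ep]
    omega

lemma card_prim_C {k : ℕ} (hk : 1 ≤ k) : Nat.card (Prim Dfalse Rbel k) = cC (k - 1) := by
  rw [card_prim_split hk, nHead_empty (by simp [Rbel]), dHead_empty (by simp [Dfalse]),
    card_empty_list]
  rw [card_eHead inv_Rbel Rbel_zero hk (hBelow_of_Rbel (fun q h => h))]
  rw [add_zero, add_zero, cC, congr_CS]
  congr 1

/-- primitive-count for the Schröder lattice -/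
lemma card_prim_S {k : ℕ} (hk : 1 ≤ k) :
    Nat.card (Prim Dtrue Rbel k) = cS (k - 1) + (if k = 1 then 1 else 0) := by
  rw [card_prim_split hk, nHead_empty (by simp [Rbel]), card_empty_list,
    card_dHead_eq hk trivial Rbel_zero (by simp [Rbel])]
  rw [card_eHead inv_Rbel Rbel_zero hk (hBelow_of_Rbel (fun q h => h))]
  rw [add_zero, cS, congr_CS]
  rfl

/-- primitive-count for the Catalan–Schröder lattice -/
lemma card_prim_F {k : ℕ} (hk : 1 ≤ k) :
    Nat.card (Prim Dle Rtop k) = cC (k - 1) + cS (k - 1) + (if k = 1 then 1 else 0) := by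
  have hE : Nat.card (EHead Dle Rtop k) = cC (k - 1) := by
    rw [card_eHead inv_Rtop Rtop_zero hk hBelow_crossing, cC]
    have hc : PathSet (fun q => Dle (q + Ep)) (fun q => Rtop (q + Ep) ∧ q.2 ≤ q.1) (k - 1)
        = PathSet Dfalse Rbel (k - 1) := by
      apply pathSet_congr
      · intro p hp
        simp only [Dle, Dfalse, Prod.fst_add, Prod.snd_add, Ep]
        constructor
        · intro h
          have := hp.2
          omega
        · intro h
          exact h.elim
      · intro p
        simp only [Rtop, Rbel, true_and]
    rw [hc]
  have hN : Nat.card (NHead Dle Rtop k) = cS (k - 1) := by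
    rw [card_nHead, card_eHead (R := fun q => Rtop (q.2, q.1)) (fun p a => Iff.rfl)
      trivial hk hBelow_crossing, cS]
    have hc : PathSet (fun q => Dle ((q + Ep).2, (q + Ep).1))
        (fun q => Rtop ((q + Ep).2, (q + Ep).1) ∧ q.2 ≤ q.1) (k - 1)
        = PathSet Dtrue Rbel (k - 1) := by
      apply pathSet_congr
      · intro p hp
        simp only [Dle, Dtrue, Prod.fst_add, Prod.snd_add, Ep]
        constructor
        · intro _; trivial
        · intro _
          have := hp.2
          omega
      · intro p
        simp only [Rtop, Rbel, true_and]
    rw [hc]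
  have hD : Nat.card (DHead Dle Rtop k) = if k = 1 then 1 else 0 :=
    card_dHead_eq (D := Dle) (R := Rtop) hk (by simp [Dle]) trivial trivial
  rw [card_prim_split hk, hE, hN, hD]

end CSAux
namespace CSAux

lemma sum_Icc_one (m : ℕ) (f : ℕ → ℕ) :
    ∑ k ∈ Finset.Icc 1 (m + 1), f k = ∑ i ∈ Finset.range (m + 1), f (1 + i) := by
  rw [← Finset.Ico_add_one_right_eq_Icc, Finset.sum_Ico_eq_sum_range]
  rfl

lemma cC_rec {n : ℕ} (hn : 1 ≤ n) :
    cC n = ∑ k ∈ Finset.Icc 1 n, cC (k - 1) * cC (n - k) := by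
  rw [cC, card_master inv_Dfalse inv_Rbel Rbel_zero hn]
  refine Finset.sum_congr rfl fun k hk => ?_
  rw [Finset.mem_Icc] at hk
  rw [card_prim_C hk.1]
  rfl

lemma cS_rec {n : ℕ} (hn : 1 ≤ n) :
    cS n = ∑ k ∈ Finset.Icc 1 n, (cS (k - 1) + if k = 1 then 1 else 0) * cS (n - k) := by
  rw [cS, card_master inv_Dtrue inv_Rbel Rbel_zero hn]
  refine Finset.sum_congr rfl fun k hk => ?_
  rw [Finset.mem_Icc] at hk
  rw [card_prim_S hk.1]
  rfl

lemma cF_rec {n : ℕ} (hn : 1 ≤ n) :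
    cF n = ∑ k ∈ Finset.Icc 1 n,
      (cC (k - 1) + cS (k - 1) + if k = 1 then 1 else 0) * cF (n - k) := by
  rw [cF, card_master inv_Dle inv_Rtop Rtop_zero hn]
  refine Finset.sum_congr rfl fun k hk => ?_
  rw [Finset.mem_Icc] at hk
  rw [card_prim_F hk.1]
  rfl

lemma cC_eq_catalan : ∀ n, cC n = catalan n := by
  intro n
  induction n using Nat.strong_induction_on with
  | _ n ih =>
    match n with
    | 0 => rw [cC_zero, catalan_zero]
    | m + 1 =>
      rw [cC_rec (by omega), catalan_succ,
        Fin.sum_univ_eq_sum_range (fun i => catalan i * catalan (m - i)) (m + 1),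
        sum_Icc_one]
      refine Finset.sum_congr rfl fun i hi => ?_
      rw [Finset.mem_range] at hi
      have h1 : 1 + i - 1 = i := by omega
      have h2 : m + 1 - (1 + i) = m - i := by omega
      rw [h1, h2, ih i (by omega), ih (m - i) (by omega)]

lemma cS_eq_schroeder : ∀ n, cS n = schroeder n := by
  intro n
  induction n using Nat.strong_induction_on with
  | _ n ih =>
    match n with
    | 0 => rw [cS_zero, schroeder]
    | m + 1 =>
      rw [cS_rec (by omega)]
      have hsplit : ∑ k ∈ Finset.Icc 1 (m + 1),
          (cS (k - 1) + if k = 1 then 1 else 0) * cS (m + 1 - k)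
          = (∑ k ∈ Finset.Icc 1 (m + 1), cS (k - 1) * cS (m + 1 - k))
            + ∑ k ∈ Finset.Icc 1 (m + 1), (if k = 1 then 1 else 0) * cS (m + 1 - k) := by
        rw [← Finset.sum_add_distrib]
        refine Finset.sum_congr rfl fun k _ => ?_
        ring
      have hite : ∑ k ∈ Finset.Icc 1 (m + 1), (if k = 1 then 1 else 0) * cS (m + 1 - k)
          = cS m := by
        rw [Finset.sum_congr rfl (fun k (_ : k ∈ Finset.Icc 1 (m + 1)) =>
          show (if k = 1 then 1 else 0) * cS (m + 1 - k)
            = if k = 1 then cS m else 0 by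
          split
          · rename_i h; subst h; simp
          · simp)]
        rw [Finset.sum_ite_eq' (Finset.Icc 1 (m + 1)) 1 (fun _ => cS m)]
        rw [if_pos (Finset.mem_Icc.mpr ⟨le_refl 1, by omega⟩)]
      rw [hsplit, hite]
      conv_rhs => rw [schroeder]
      rw [Fin.sum_univ_eq_sum_range (fun i => schroeder i * schroeder (m - i)) (m + 1),
        sum_Icc_one]
      rw [ih m (by omega)]
      rw [add_comm (schroeder m)]
      congr 1
      refine Finset.sum_congr rfl fun i hi => ?_
      rw [Finset.mem_range] at hi
      have h1 : 1 + i - 1 = i := by omega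
      have h2 : m + 1 - (1 + i) = m - i := by omega
      rw [h1, h2, ih i (by omega), ih (m - i) (by omega)]

lemma fCS_eq_cF (n : ℕ) : fCS n = cF n := by
  have hset : LCS n n = PathSet Dle Rtop n := by
    ext l
    constructor
    · rintro ⟨h1, h2⟩
      exact ⟨h1, h2, fun _ _ => trivial⟩
    · rintro ⟨h1, h2, -⟩
      exact ⟨h1, h2⟩
  rw [fCS, cF, hset]

end CSAux

/-- f_0 = 1 and, for n ≥ 1,
f_n = Σ_{k=1}^{n} (C_{k-1} + S_{k-1} + [k=1])·f_{n-k}. -/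
theorem fCS_recurrence :
    fCS 0 = 1 ∧ ∀ n : ℕ, 1 ≤ n →
      fCS n = ∑ k ∈ Finset.Icc 1 n,
        (catalan (k - 1) + schroeder (k - 1) + if k = 1 then 1 else 0) * fCS (n - k) := by
  constructor
  · rw [CSAux.fCS_eq_cF, CSAux.cF_zero]
  · intro n hn
    rw [CSAux.fCS_eq_cF, CSAux.cF_rec hn]
    refine Finset.sum_congr rfl fun k hk => ?_
    rw [CSAux.cC_eq_catalan, CSAux.cS_eq_schroeder, CSAux.fCS_eq_cF]
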